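/- Let (A_n) and (B_n) be projective systems of R-modules and f: (A_n) → (B_n) a morphism of systems whose kernel and cokernel systems are AR-null. Then the induced maps lim A_n → lim B_n and lim^1 A_n → lim^1 B_n are isomorphisms. -/
import Mathlib


/-- Iterated transition map `A (n+r) → A n` of a projective system. -/
def trIter {R : Type} [Ring R] {A : ℕ → Type} [∀ n, AddCommGroup (A n)]
    [∀ n, Module R (A n)] (t : ∀ n, A (n + 1) →ₗ[R] A n) :
    ∀ (r n : ℕ), A (n + r) →ₗ[R] A n
  | 0, _ => LinearMap.id
  | r + 1, n => (trIter t r n).comp (t (n + r))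



section helpers
variable {R : Type} [Ring R] {A B : ℕ → Type}
  [∀ n, AddCommGroup (A n)] [∀ n, Module R (A n)]
  [∀ n, AddCommGroup (B n)] [∀ n, Module R (B n)]

lemma trIter_compat (t : ∀ n, A (n+1) →ₗ[R] A n) (x : ∀ n, A n)
    (hx : ∀ n, t n (x (n+1)) = x n) : ∀ r n, trIter t r n (x (n+r)) = x n
  | 0, n => rfl
  | r+1, n => by
      show trIter t r n (t (n+r) (x (n+r+1))) = x n
      rw [hx (n+r)]
      exact trIter_compat t x hx r n

lemma trIter_fam (t : ∀ n, A (n+1) →ₗ[R] A n) :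
    ∀ (r n : ℕ) (a : ∀ m, A m),
      t n (trIter t r (n+1) (a (n+1+r))) = trIter t (r+1) n (a (n+r+1))
  | 0, _, _ => rfl
  | r+1, n, a => trIter_fam t r n (fun m => t m (a (m+1)))

lemma trIter_f (tA : ∀ n, A (n+1) →ₗ[R] A n) (tB : ∀ n, B (n+1) →ₗ[R] B n)
    (f : ∀ n, A n →ₗ[R] B n)
    (hcomm : ∀ n (a : A (n + 1)), f n (tA n a) = tB n (f (n + 1) a)) :
    ∀ r n (a : A (n+r)), f n (trIter tA r n a) = trIter tB r n (f (n+r) a)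
  | 0, _, _ => rfl
  | r+1, n, a => by
      show f n (trIter tA r n (tA (n+r) a)) = trIter tB r n (tB (n+r) (f (n+r+1) a))
      rw [trIter_f tA tB f hcomm r n, hcomm]

lemma trIter_tele (t : ∀ n, A (n+1) →ₗ[R] A n) (y : ∀ m, A m) :
    ∀ (r n : ℕ),
      (∑ k ∈ Finset.range r, trIter t k n (y (n+k))) -
        t n (∑ k ∈ Finset.range r, trIter t k (n+1) (y (n+1+k)))
      = y n - trIter t r n (y (n+r)) := by
  intro r
  induction r with
  | zero => intro n; simp [trIter]
  | succ r ih =>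
      intro n
      rw [Finset.sum_range_succ, Finset.sum_range_succ, map_add, trIter_fam]
      have h := ih n
      have : (∑ k ∈ Finset.range r, trIter t k n (y (n+k))) + trIter t r n (y (n+r))
          - (t n (∑ k ∈ Finset.range r, trIter t k (n+1) (y (n+1+k)))
            + trIter t (r+1) n (y (n+r+1)))
          = ((∑ k ∈ Finset.range r, trIter t k n (y (n+k)))
            - t n (∑ k ∈ Finset.range r, trIter t k (n+1) (y (n+1+k))))
            + trIter t r n (y (n+r)) - trIter t (r+1) n (y (n+r+1)) := by abel
      rw [this, h]
      abel

end helpers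

/- STATEMENT 19: Let f : (A_n) → (B_n) be a morphism of projective systems of R-modules
   whose kernel and cokernel systems are AR-null (kernel AR-null: elements killed by
   f_{n+r} die under the r-fold transition; cokernel AR-null: the r-fold transition of any
   element of B_{n+r} lands in the image of f_n).  Then f induces an isomorphism on
   lim (bijection between compatible families) and on lim¹ (the induced map of cokernels of
   the shift-minus-identity maps D_A, D_B is bijective, stated elementwise). -/
theorem stmt19 (R : Type) [Ring R] (A B : ℕ → Type)
    [∀ n, AddCommGroup (A n)] [∀ n, Module R (A n)]
    [∀ n, AddCommGroup (B n)] [∀ n, Module R (B n)]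
    (tA : ∀ n, A (n + 1) →ₗ[R] A n) (tB : ∀ n, B (n + 1) →ₗ[R] B n)
    (f : ∀ n, A n →ₗ[R] B n)
    (hcomm : ∀ n (a : A (n + 1)), f n (tA n a) = tB n (f (n + 1) a))
    (hker : ∃ r : ℕ, ∀ n (a : A (n + r)), f (n + r) a = 0 → trIter tA r n a = 0)
    (hcoker : ∃ r : ℕ, ∀ n (b : B (n + r)), ∃ a : A n, f n a = trIter tB r n b) :
    -- lim f is bijective:
    ((∀ x y : ∀ n, A n, (∀ n, tA n (x (n + 1)) = x n) → (∀ n, tA n (y (n + 1)) = y n) →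
        (∀ n, f n (x n) = f n (y n)) → x = y) ∧
     (∀ z : ∀ n, B n, (∀ n, tB n (z (n + 1)) = z n) →
        ∃ x : ∀ n, A n, (∀ n, tA n (x (n + 1)) = x n) ∧ ∀ n, f n (x n) = z n) ∧
    -- lim¹ f is surjective:
     (∀ y : ∀ n, B n, ∃ (x : ∀ n, A n) (z : ∀ n, B n),
        ∀ n, f n (x n) = y n + (z n - tB n (z (n + 1)))) ∧
    -- lim¹ f is injective:
     (∀ x : ∀ n, A n, (∃ z : ∀ n, B n, ∀ n, f n (x n) = z n - tB n (z (n + 1))) →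
        ∃ w : ∀ n, A n, ∀ n, x n = w n - tA n (w (n + 1)))) := by
  obtain ⟨r₁, hk⟩ := hker
  obtain ⟨r₂, hc⟩ := hcoker
  refine ⟨?_, ?_, ?_, ?_⟩
  · -- lim injective
    intro x y hx hy hfe
    funext n
    have hd : ∀ m, tA m (x (m+1) - y (m+1)) = x m - y m := by
      intro m; rw [map_sub, hx, hy]
    have h0 : f (n + r₁) (x (n+r₁) - y (n+r₁)) = 0 := by
      rw [map_sub, hfe, sub_self]
    have := hk n _ h0
    rw [trIter_compat tA (fun m => x m - y m) hd r₁ n] at this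
    exact sub_eq_zero.mp this
  · -- lim surjective
    intro z hz
    choose a ha using fun n => hc n (z (n + r₂))
    have ha' : ∀ n, f n (a n) = z n := by
      intro n; rw [ha, trIter_compat tB z hz r₂ n]
    refine ⟨fun n => trIter tA r₁ n (a (n + r₁)), ?_, ?_⟩
    · intro n
      have he : ∀ m, f m (tA m (a (m+1)) - a m) = 0 := by
        intro m; rw [map_sub, hcomm, ha', ha', hz, sub_self]
      have h0 := hk n _ (he (n + r₁))
      rw [map_sub, sub_eq_zero] at h0
      have h1 : tA n (trIter tA r₁ (n+1) (a (n+1+r₁)))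
          = trIter tA (r₁+1) n (a (n+r₁+1)) := trIter_fam tA r₁ n a
      have h2 : trIter tA (r₁+1) n (a (n+r₁+1))
          = trIter tA r₁ n (tA (n+r₁) (a (n+r₁+1))) := rfl
      rw [h1, h2, h0]
    · intro n
      rw [trIter_f tA tB f hcomm r₁ n, ha']
      exact trIter_compat tB z hz r₁ n
  · -- lim¹ surjective
    intro y
    choose x hx using fun n => hc n (y (n + r₂))
    refine ⟨x, fun n => -(∑ k ∈ Finset.range r₂, trIter tB k n (y (n+k))), fun n => ?_⟩
    rw [hx, map_neg]
    have h := trIter_tele tB y r₂ n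
    have : y n + (-(∑ k ∈ Finset.range r₂, trIter tB k n (y (n+k))) -
        -(tB n (∑ k ∈ Finset.range r₂, trIter tB k (n+1) (y (n+1+k)))))
        = y n - ((∑ k ∈ Finset.range r₂, trIter tB k n (y (n+k))) -
          tB n (∑ k ∈ Finset.range r₂, trIter tB k (n+1) (y (n+1+k)))) := by abel
    rw [this, h]
    abel
  · -- lim¹ injective
    rintro x ⟨z, hz⟩
    choose c hcz using fun n => hc n (z (n + r₂))
    set u : ∀ m, A m := fun m => trIter tA r₂ m (x (m + r₂)) with hu
    have hv : ∀ m, f m (u m - c m + tA m (c (m+1))) = 0 := by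
      intro m
      have h1 : f m (u m) = trIter tB r₂ m (z (m+r₂))
          - trIter tB (r₂+1) m (z (m+r₂+1)) := by
        rw [hu]
        rw [trIter_f tA tB f hcomm r₂ m, hz, map_sub]
        rfl
      have h2 : f m (tA m (c (m+1))) = trIter tB (r₂+1) m (z (m+r₂+1)) := by
        rw [hcomm, hcz, trIter_fam tB r₂ m z]
      rw [map_add, map_sub, h1, h2, hcz]
      abel
    set c' : ∀ n, A n := fun n => trIter tA r₁ n (c (n + r₁)) with hc'
    have key : ∀ n, trIter tA r₁ n (u (n+r₁)) = c' n - tA n (c' (n+1)) := by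
      intro n
      have h0 := hk n _ (hv (n + r₁))
      rw [map_add, map_sub] at h0
      have h1 : trIter tA r₁ n (tA (n+r₁) (c (n+r₁+1)))
          = tA n (trIter tA r₁ (n+1) (c (n+1+r₁))) := by
        rw [trIter_fam tA r₁ n c]; rfl
      rw [h1] at h0
      have h2 : trIter tA r₁ n (u (n+r₁))
          - (trIter tA r₁ n (c (n+r₁)) - tA n (trIter tA r₁ (n+1) (c (n+1+r₁)))) = 0 := by
        rw [show trIter tA r₁ n (u (n+r₁))
            - (trIter tA r₁ n (c (n+r₁)) - tA n (trIter tA r₁ (n+1) (c (n+1+r₁))))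
            = trIter tA r₁ n (u (n+r₁)) - trIter tA r₁ n (c (n+r₁))
              + tA n (trIter tA r₁ (n+1) (c (n+1+r₁))) from by abel, h0]
      exact sub_eq_zero.mp h2
    refine ⟨fun n => (∑ k ∈ Finset.range r₂, trIter tA k n (x (n+k)))
      + (∑ k ∈ Finset.range r₁, trIter tA k n (u (n+k))) + c' n, fun n => ?_⟩
    have t2 := trIter_tele tA x r₂ n
    have t1 := trIter_tele tA u r₁ n
    rw [key n] at t1
    rw [map_add, map_add]
    have expand : (∑ k ∈ Finset.range r₂, trIter tA k n (x (n+k)))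
        + (∑ k ∈ Finset.range r₁, trIter tA k n (u (n+k))) + c' n
        - (tA n (∑ k ∈ Finset.range r₂, trIter tA k (n+1) (x (n+1+k)))
          + tA n (∑ k ∈ Finset.range r₁, trIter tA k (n+1) (u (n+1+k)))
          + tA n (c' (n+1)))
        = ((∑ k ∈ Finset.range r₂, trIter tA k n (x (n+k)))
            - tA n (∑ k ∈ Finset.range r₂, trIter tA k (n+1) (x (n+1+k))))
          + ((∑ k ∈ Finset.range r₁, trIter tA k n (u (n+k)))
            - tA n (∑ k ∈ Finset.range r₁, trIter tA k (n+1) (u (n+1+k))))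
          + (c' n - tA n (c' (n+1))) := by abel
    rw [expand, t2, t1]
    abel
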